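/- arXiv:1407.1543 — 2 statements merged into one kernel-verified Lean document; each statement's English description precedes it below -/
import Mathlib

section
/- Let c ∈ ℝⁿ be a unit vector, let k ≥ 1 be an integer, and let ε > 0 and τ ∈ (0,1) satisfy (1+k)·τ ≤ 1/2. Let L be a degree-2(1+2k) pseudoexpectation on ℝ[u₁,…,u_n] that satisfies the constraint {‖u‖₂² = 1}, and suppose L(⟨c,u⟩^{2(1+2k)}) ≥ e^{−εk}·L(⟨c,u⟩²) and L(⟨c,u⟩²) ≥ τ^k. Let W̄ ∈ ℝ[u₁,…,u_n] be a polynomial such that W̄ − ⟨c,u⟩^{2(1+k)} is a sum of squares and (⟨c,u⟩² + τ·‖u‖₂²)^{1+k} − W̄ is a sum of squares. Then L(W̄·⟨c,u⟩^{2k}) ≥ e^{−εk − 2(2+k)τ}·L(W̄). -/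
/-!
Write `v = ⟨c,u⟩`. For the upper bound, `L W̄ ≤ L (v² + τ‖u‖²)^{1+k}`; expanding binomially and
using `‖u‖² = 1` this is `∑ᵢ (1+k choose i) τ^{1+k-i} L v^{2i}`. Since
`‖u‖² - v² = ∑ⱼ (uⱼ - cⱼ v)²`, the moments `L v^{2i}` are nonincreasing in `i ≥ 1`, and `L 1 = 1`
is absorbed into `τ L v²` by `L v² ≥ τ^k`; hence `L W̄ ≤ ((1+τ)^{1+k} + τ) L v² ≤ e^{2(2+k)τ} L v²`.
For the lower bound, `W̄ v^{2k} - v^{2(1+2k)} = (W̄ - v^{2(1+k)}) (v^k)²` is a sum of squares, so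
`L (W̄ v^{2k}) ≥ L v^{2(1+2k)} ≥ e^{-εk} L v²`.

The sum-of-squares certificates for `W̄` carry no degree bound. One is recovered because over `ℝ`
the top homogeneous parts of squares cannot cancel, so both certificates sandwiching `W̄` have
degree at most that of `(v² + τ‖u‖²)^{1+k} - v^{2(1+k)}`.
-/

open MvPolynomial

def IsSOS {σ : Type*} (p : MvPolynomial σ ℝ) : Prop :=
  ∃ (r : ℕ) (q : Fin r → MvPolynomial σ ℝ), p = ∑ i, q i ^ 2

def IsPseudoExpectation (n k : ℕ) (L : MvPolynomial (Fin n) ℝ → ℝ) : Prop :=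
  (∀ P Q : MvPolynomial (Fin n) ℝ, L (P + Q) = L P + L Q) ∧
  (∀ (c : ℝ) (P : MvPolynomial (Fin n) ℝ), L (c • P) = c * L P) ∧
  L 1 = 1 ∧
  ∀ P : MvPolynomial (Fin n) ℝ, (P ^ 2).totalDegree ≤ k → 0 ≤ L (P ^ 2)

def SatisfiesZero (n k : ℕ) (L : MvPolynomial (Fin n) ℝ → ℝ)
    (P : MvPolynomial (Fin n) ℝ) : Prop :=
  ∀ Q : MvPolynomial (Fin n) ℝ, (P * Q).totalDegree ≤ k → L (P * Q) = 0

namespace MvPolynomial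
variable {σ : Type*}

theorem homogeneousComponent_add_mul_of_totalDegree_le {R : Type*} [CommSemiring R]
    {p q : MvPolynomial σ R} {a b : ℕ} (hp : p.totalDegree ≤ a) (hq : q.totalDegree ≤ b) :
    homogeneousComponent (a + b) (p * q) =
      homogeneousComponent a p * homogeneousComponent b q := by
  classical
  ext d
  rw [coeff_homogeneousComponent]
  split_ifs with hd
  · rw [coeff_mul, coeff_mul]
    refine Finset.sum_congr rfl fun x hx => ?_
    have hdeg : x.1.degree + x.2.degree = a + b := by
      rw [← map_add, Finset.HasAntidiagonal.mem_antidiagonal.1 hx, hd]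
    rw [coeff_homogeneousComponent, coeff_homogeneousComponent]
    by_cases h₁ : x.1.degree = a
    · rw [if_pos h₁, if_pos (by omega)]
    · rw [if_neg h₁]
      rcases lt_or_gt_of_ne h₁ with h₁ | h₁
      · rw [coeff_eq_zero_of_totalDegree_lt (f := q) (by rw [← Finsupp.degree_apply]; omega)]
        simp
      · rw [coeff_eq_zero_of_totalDegree_lt (f := p) (by rw [← Finsupp.degree_apply]; omega)]
        simp
  · exact (((homogeneousComponent_isHomogeneous a p).mul
      (homogeneousComponent_isHomogeneous b q)).coeff_eq_zero hd).symm

theorem homogeneousComponent_totalDegree_ne_zero {R : Type*} [CommSemiring R]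
    {p : MvPolynomial σ R} (hp : p ≠ 0) : homogeneousComponent p.totalDegree p ≠ 0 := by
  obtain ⟨d, hd, hdeg⟩ := p.support.exists_mem_eq_sup (support_nonempty.2 hp) Finsupp.degree
  rw [Ne, ← support_eq_empty, support_homogeneousComponent, Finset.filter_eq_empty_iff]
  exact fun h => h hd (hdeg.symm.trans rfl)

theorem eq_zero_of_sum_sq_eq_zero {ι : Type*} {s : Finset ι} {q : ι → MvPolynomial σ ℝ}
    (h : ∑ j ∈ s, q j ^ 2 = 0) {i : ι} (hi : i ∈ s) : q i = 0 :=
  MvPolynomial.funext fun x => by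
    have hx : ∑ j ∈ s, eval x (q j) ^ 2 = 0 := by simpa using congrArg (eval x) h
    simpa using (Finset.sum_eq_zero_iff_of_nonneg fun j _ => sq_nonneg _).1 hx i hi

theorem two_mul_totalDegree_le_totalDegree_sum_sq {ι : Type*} {s : Finset ι}
    {q : ι → MvPolynomial σ ℝ} {i : ι} (hi : i ∈ s) :
    2 * (q i).totalDegree ≤ (∑ j ∈ s, q j ^ 2).totalDegree := by
  obtain ⟨j₀, hj₀, hmax⟩ := s.exists_max_image (fun j => (q j).totalDegree) ⟨i, hi⟩
  set m := (q j₀).totalDegree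
  by_contra! hlt
  have hq₀ : q j₀ ≠ 0 := by
    rintro h
    have : m = 0 := by simp [m, h]
    have := hmax i hi
    omega
  have htop : ∑ j ∈ s, homogeneousComponent m (q j) ^ 2 = 0 := by
    have hdeg : (∑ j ∈ s, q j ^ 2).totalDegree < m + m := by have := hmax i hi; omega
    rw [← homogeneousComponent_eq_zero (m + m) _ hdeg, map_sum]
    exact Finset.sum_congr rfl fun j hj => by
      rw [sq, sq, homogeneousComponent_add_mul_of_totalDegree_le (hmax j hj) (hmax j hj)]
  exact homogeneousComponent_totalDegree_ne_zero hq₀ (eq_zero_of_sum_sq_eq_zero htop hj₀)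

end MvPolynomial

section SumOfSquares
variable {σ : Type*} {p q : MvPolynomial σ ℝ}

theorem IsSOS.mul_sq (hp : IsSOS p) (q : MvPolynomial σ ℝ) : IsSOS (p * q ^ 2) := by
  obtain ⟨r, a, rfl⟩ := hp
  exact ⟨r, fun i => a i * q, by simp [Finset.sum_mul, mul_pow]⟩

theorem IsSOS.totalDegree_le_totalDegree_add (hp : IsSOS p) (hq : IsSOS q) :
    p.totalDegree ≤ (p + q).totalDegree := by
  obtain ⟨r, a, rfl⟩ := hp
  obtain ⟨s, b, rfl⟩ := hq
  have hsum : ∑ i, a i ^ 2 + ∑ j, b j ^ 2 = ∑ i, Fin.append a b i ^ 2 := by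
    simp [Fin.sum_univ_add]
  refine (totalDegree_finsetSum _ _).trans (Finset.sup_le fun i _ => ?_)
  calc (a i ^ 2).totalDegree ≤ 2 * (a i).totalDegree := totalDegree_pow _ _
    _ ≤ _ := by
      simpa [hsum] using two_mul_totalDegree_le_totalDegree_sum_sq
        (q := Fin.append a b) (Finset.mem_univ (Fin.castAdd s i))

end SumOfSquares

section LinearForm
variable {σ R : Type*}

theorem totalDegree_sum_C_mul_X_le [Fintype σ] [CommSemiring R] [Nontrivial R] (c : σ → R) :
    (∑ j, C (c j) * X j : MvPolynomial σ R).totalDegree ≤ 1 :=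
  (totalDegree_finsetSum _ _).trans <| Finset.sup_le fun j _ =>
    (totalDegree_mul _ _).trans <| by rw [totalDegree_C, totalDegree_X]

theorem totalDegree_sum_X_sq_le [Fintype σ] [CommSemiring R] [Nontrivial R] :
    (∑ j, X j ^ 2 : MvPolynomial σ R).totalDegree ≤ 2 :=
  (totalDegree_finsetSum _ _).trans <| Finset.sup_le fun j _ => by rw [totalDegree_X_pow]

theorem totalDegree_sq_add_C_mul_le [CommSemiring R] {v u : MvPolynomial σ R}
    (hv : v.totalDegree ≤ 1) (hu : u.totalDegree ≤ 2) (τ : R) :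
    (v ^ 2 + C τ * u).totalDegree ≤ 2 := by
  refine (totalDegree_add _ _).trans (max_le ((totalDegree_pow _ _).trans (by omega)) ?_)
  exact (totalDegree_mul _ _).trans (by rw [totalDegree_C]; omega)

theorem sum_X_sq_sub_sq_eq_sum_sq [Fintype σ] [CommRing R] (c : σ → R)
    (hc : ∑ j, c j ^ 2 = 1) :
    ∑ j, X j ^ 2 - (∑ j, C (c j) * X j) ^ 2 =
      ∑ j, (X j - C (c j) * ∑ i, C (c i) * X i : MvPolynomial σ R) ^ 2 := by
  set v : MvPolynomial σ R := ∑ i, C (c i) * X i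
  have hc' : ∑ j, (C (c j) : MvPolynomial σ R) ^ 2 = 1 := by
    simp_rw [← map_pow, ← map_sum, hc, map_one]
  symm
  calc ∑ j, (X j - C (c j) * v) ^ 2
      = ∑ j, (X j ^ 2 - 2 * (C (c j) * X j) * v + C (c j) ^ 2 * v ^ 2) :=
        Finset.sum_congr rfl fun j _ => by ring
    _ = ∑ j, X j ^ 2 - 2 * v * v + (∑ j, C (c j) ^ 2) * v ^ 2 := by
        simp only [Finset.sum_add_distrib, Finset.sum_sub_distrib, ← Finset.sum_mul,
          ← Finset.mul_sum, v]
    _ = ∑ j, X j ^ 2 - v ^ 2 := by rw [hc']; ring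

end LinearForm

namespace IsPseudoExpectation
variable {n D : ℕ} {L : MvPolynomial (Fin n) ℝ → ℝ} (hL : IsPseudoExpectation n D L)
include hL

def toLinearMap : MvPolynomial (Fin n) ℝ →ₗ[ℝ] ℝ where
  toFun := L
  map_add' := hL.1
  map_smul' := hL.2.1

theorem map_sub (p q : MvPolynomial (Fin n) ℝ) : L (p - q) = L p - L q :=
  _root_.map_sub hL.toLinearMap p q

theorem map_sum {ι : Type*} (s : Finset ι) (f : ι → MvPolynomial (Fin n) ℝ) :
    L (∑ i ∈ s, f i) = ∑ i ∈ s, L (f i) :=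
  _root_.map_sum hL.toLinearMap f s

theorem map_C_mul (a : ℝ) (p : MvPolynomial (Fin n) ℝ) : L (C a * p) = a * L p := by
  rw [← smul_eq_C_mul]
  exact hL.2.1 a p

theorem nonneg_of_isSOS {S : MvPolynomial (Fin n) ℝ} (hS : IsSOS S) (hD : S.totalDegree ≤ D) :
    0 ≤ L S := by
  obtain ⟨r, q, rfl⟩ := hS
  rw [hL.map_sum]
  refine Finset.sum_nonneg fun i hi => hL.2.2.2 _ ?_
  have := two_mul_totalDegree_le_totalDegree_sum_sq (q := q) hi
  have := totalDegree_pow (q i) 2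
  omega

theorem le_of_isSOS_sub {P Q : MvPolynomial (Fin n) ℝ} (h : IsSOS (Q - P))
    (hD : (Q - P).totalDegree ≤ D) : L P ≤ L Q := by
  have := hL.nonneg_of_isSOS h hD
  rw [hL.map_sub] at this
  linarith

theorem apply_mul_eq_of_satisfiesZero {P Q : MvPolynomial (Fin n) ℝ}
    (h : SatisfiesZero n D L (P - 1)) (hQ : ((P - 1) * Q).totalDegree ≤ D) : L (P * Q) = L Q := by
  have := h Q hQ
  rwa [sub_mul, one_mul, hL.map_sub, sub_eq_zero] at this

theorem apply_pow_mul_eq_of_satisfiesZero {P : MvPolynomial (Fin n) ℝ} {d : ℕ}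
    (h : SatisfiesZero n D L (P - 1)) (hP : P.totalDegree ≤ d) (m : ℕ)
    {Q : MvPolynomial (Fin n) ℝ} (hQ : Q.totalDegree + d * m ≤ D) : L (P ^ m * Q) = L Q := by
  induction m generalizing Q with
  | zero => simp
  | succ m ih =>
    have hP1 : (P - 1).totalDegree ≤ d :=
      (totalDegree_sub _ _).trans (max_le hP (by simp))
    have hPm := (totalDegree_pow P m).trans (Nat.mul_le_mul_left m hP)
    rw [pow_succ', mul_assoc, hL.apply_mul_eq_of_satisfiesZero h, ih]
    · nlinarith
    · refine (totalDegree_mul _ _).trans ?_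
      have := totalDegree_mul (P ^ m) Q
      nlinarith

section Moments
variable {v u : MvPolynomial (Fin n) ℝ} (hv : v.totalDegree ≤ 1)
include hv

theorem apply_pow_le_apply_mul_pow {W : MvPolynomial (Fin n) ℝ} {m : ℕ}
    (hW : IsSOS (W - v ^ (2 * m))) (hWd : (W - v ^ (2 * m)).totalDegree ≤ 2 * m) (k : ℕ)
    (hD : 2 * m + 2 * k ≤ D) : L (v ^ (2 * m + 2 * k)) ≤ L (W * v ^ (2 * k)) := by
  have hsos : W * v ^ (2 * k) - v ^ (2 * m + 2 * k) = (W - v ^ (2 * m)) * (v ^ k) ^ 2 := by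
    ring
  refine hL.le_of_isSOS_sub (hsos ▸ hW.mul_sq _) ?_
  rw [hsos]
  have := totalDegree_pow (v ^ k) 2
  have := totalDegree_pow v k
  have := totalDegree_mul (W - v ^ (2 * m)) ((v ^ k) ^ 2)
  nlinarith

variable (hu : u.totalDegree ≤ 2) (hconstr : SatisfiesZero n D L (u - 1))
include hu hconstr

theorem apply_pow_succ_le (hvu : IsSOS (u - v ^ 2)) {i : ℕ} (hi : 2 * (i + 1) ≤ D) :
    L (v ^ (2 * (i + 1))) ≤ L (v ^ (2 * i)) := by
  have hsos : u * v ^ (2 * i) - v ^ (2 * (i + 1)) = (u - v ^ 2) * (v ^ i) ^ 2 := by ring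
  have hvi : (v ^ (2 * i)).totalDegree ≤ 2 * i := (totalDegree_pow _ _).trans (by nlinarith)
  have hvi' : ((v ^ i) ^ 2).totalDegree ≤ 2 * i := by rw [← pow_mul, mul_comm]; exact hvi
  calc L (v ^ (2 * (i + 1))) ≤ L (u * v ^ (2 * i)) := by
        refine hL.le_of_isSOS_sub (hsos ▸ hvu.mul_sq _) ?_
        rw [hsos]
        refine (totalDegree_mul _ _).trans ?_
        have := (totalDegree_sub u (v ^ 2)).trans
          (max_le hu ((totalDegree_pow v 2).trans (by omega)))
        omega
    _ = L (v ^ (2 * i)) := by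
        refine hL.apply_mul_eq_of_satisfiesZero hconstr ((totalDegree_mul _ _).trans ?_)
        have := (totalDegree_sub u 1).trans (max_le hu (by simp))
        omega

theorem apply_pow_le_apply_sq (hvu : IsSOS (u - v ^ 2)) {i : ℕ} (hi : 1 ≤ i)
    (hD : 2 * i ≤ D) :
    L (v ^ (2 * i)) ≤ L (v ^ 2) := by
  induction i, hi using Nat.le_induction with
  | base => simp
  | succ i hi ih => exact (hL.apply_pow_succ_le hv hu hconstr hvu hD).trans (ih (by omega))

theorem apply_sq_add_C_mul_pow (τ : ℝ) {m : ℕ} (hm : 2 * m ≤ D) :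
    L ((v ^ 2 + C τ * u) ^ m) =
      ∑ i ∈ Finset.range (m + 1), m.choose i * τ ^ (m - i) * L (v ^ (2 * i)) := by
  rw [add_pow, hL.map_sum]
  refine Finset.sum_congr rfl fun i hi => ?_
  have hterm : (v ^ 2) ^ i * (C τ * u) ^ (m - i) * (m.choose i : MvPolynomial (Fin n) ℝ) =
      C (m.choose i * τ ^ (m - i)) * (u ^ (m - i) * v ^ (2 * i)) := by
    rw [map_mul, map_pow, map_natCast, pow_mul]
    ring
  rw [hterm, hL.map_C_mul, hL.apply_pow_mul_eq_of_satisfiesZero hconstr hu]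
  have := (totalDegree_pow v (2 * i)).trans (Nat.mul_le_mul_left _ hv)
  have := Finset.mem_range.1 hi
  omega

theorem apply_sq_add_C_mul_pow_le (hvu : IsSOS (u - v ^ 2)) {τ : ℝ} (hτ : 0 ≤ τ) {m : ℕ}
    (hm : 2 * m ≤ D) :
    L ((v ^ 2 + C τ * u) ^ m) ≤ ((1 + τ) ^ m - τ ^ m) * L (v ^ 2) + τ ^ m := by
  have hbinom : ∑ i ∈ Finset.range m, (m.choose (i + 1) : ℝ) * τ ^ (m - (i + 1)) =
      (1 + τ) ^ m - τ ^ m := by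
    rw [add_pow, Finset.sum_range_succ']
    simp [mul_comm]
  rw [hL.apply_sq_add_C_mul_pow hv hu hconstr τ hm, Finset.sum_range_succ', ← hbinom,
    Finset.sum_mul]
  simp only [Nat.choose_zero_right, Nat.cast_one, one_mul, Nat.sub_zero, mul_zero, pow_zero,
    hL.2.2.1, mul_one]
  gcongr with i hi
  exact hL.apply_pow_le_apply_sq hv hu hconstr hvu (by omega)
    (by have := Finset.mem_range.1 hi; omega)

end Moments

end IsPseudoExpectation

theorem one_add_pow_add_le_exp {τ : ℝ} (hτ : 0 ≤ τ) (k : ℕ) :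
    (1 + τ) ^ (1 + k) + τ ≤ Real.exp (2 * (2 + k) * τ) := by
  have hpow : (1 + τ) ^ (1 + k) ≤ Real.exp ((1 + k) * τ) := by
    calc (1 + τ) ^ (1 + k) ≤ Real.exp τ ^ (1 + k) := by
          gcongr; linarith [Real.add_one_le_exp τ]
      _ = Real.exp ((1 + k) * τ) := by rw [← Real.exp_nat_mul]; push_cast; ring_nf
  have hone : 1 ≤ Real.exp ((1 + k) * τ) := Real.one_le_exp (by positivity)
  calc (1 + τ) ^ (1 + k) + τ ≤ Real.exp ((1 + k) * τ) * (1 + τ) := by nlinarith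
    _ ≤ Real.exp ((1 + k) * τ) * Real.exp ((3 + k) * τ) := by
        have : 0 ≤ (k : ℝ) * τ := by positivity
        gcongr; linarith [Real.add_one_le_exp ((3 + k) * τ)]
    _ = Real.exp (2 * (2 + k) * τ) := by rw [← Real.exp_add]; ring_nf

theorem stmt17_general (n : ℕ) (c : Fin n → ℝ) (hc : ∑ j, c j ^ 2 = 1)
    (k : ℕ) (ε τ : ℝ) (hτ0 : 0 < τ)
    (L : MvPolynomial (Fin n) ℝ → ℝ)
    (hL : IsPseudoExpectation n (2 * (1 + 2 * k)) L)
    (hconstr : SatisfiesZero n (2 * (1 + 2 * k)) L ((∑ j, X j ^ 2) - 1))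
    (h1 : Real.exp (-(ε * k)) * L ((∑ j, C (c j) * X j) ^ 2) ≤
      L ((∑ j, C (c j) * X j) ^ (2 * (1 + 2 * k))))
    (h2 : τ ^ k ≤ L ((∑ j, C (c j) * X j) ^ 2))
    (Wbar : MvPolynomial (Fin n) ℝ)
    (hW1 : IsSOS (Wbar - (∑ j, C (c j) * X j) ^ (2 * (1 + k))))
    (hW2 : IsSOS (((∑ j, C (c j) * X j) ^ 2 + C τ * ∑ j, X j ^ 2) ^ (1 + k) - Wbar)) :
    Real.exp (-(ε * k) - 2 * (2 + k) * τ) * L Wbar ≤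
      L (Wbar * (∑ j, C (c j) * X j) ^ (2 * k)) := by
  set v : MvPolynomial (Fin n) ℝ := ∑ j, C (c j) * X j
  set u : MvPolynomial (Fin n) ℝ := ∑ j, X j ^ 2
  have hv : v.totalDegree ≤ 1 := totalDegree_sum_C_mul_X_le c
  have hu : u.totalDegree ≤ 2 := totalDegree_sum_X_sq_le
  have hvu : IsSOS (u - v ^ 2) := ⟨n, _, sum_X_sq_sub_sq_eq_sum_sq c hc⟩
  have hv2 : 0 ≤ L (v ^ 2) := (pow_pos hτ0 k).le.trans h2
  have hE : ((v ^ 2 + C τ * u) ^ (1 + k) - v ^ (2 * (1 + k))).totalDegree ≤ 2 * (1 + k) := by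
    have := totalDegree_sq_add_C_mul_le hv hu τ
    refine (totalDegree_sub _ _).trans (max_le ?_ ?_) <;>
      refine (totalDegree_pow _ _).trans (by nlinarith)
  have hW1d := hW1.totalDegree_le_totalDegree_add hW2
  have hW2d := hW2.totalDegree_le_totalDegree_add hW1
  rw [sub_add_sub_cancel'] at hW1d
  rw [sub_add_sub_cancel] at hW2d
  have hupper : L Wbar ≤ Real.exp (2 * (2 + k) * τ) * L (v ^ 2) :=
    calc L Wbar ≤ L ((v ^ 2 + C τ * u) ^ (1 + k)) := hL.le_of_isSOS_sub hW2 (by omega)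
      _ ≤ ((1 + τ) ^ (1 + k) - τ ^ (1 + k)) * L (v ^ 2) + τ ^ (1 + k) :=
        hL.apply_sq_add_C_mul_pow_le hv hu hconstr hvu hτ0.le (by omega)
      _ ≤ ((1 + τ) ^ (1 + k) + τ) * L (v ^ 2) := by
        have : τ ^ (1 + k) ≤ τ * L (v ^ 2) := by
          rw [pow_add, pow_one]; exact mul_le_mul_of_nonneg_left h2 hτ0.le
        nlinarith [pow_pos hτ0 (1 + k)]
      _ ≤ Real.exp (2 * (2 + k) * τ) * L (v ^ 2) := by
        gcongr; exact one_add_pow_add_le_exp hτ0.le k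
  have hlower : L (v ^ (2 * (1 + k) + 2 * k)) ≤ L (Wbar * v ^ (2 * k)) :=
    hL.apply_pow_le_apply_mul_pow hv hW1 (hW1d.trans hE) k (by omega)
  calc Real.exp (-(ε * k) - 2 * (2 + k) * τ) * L Wbar
      ≤ Real.exp (-(ε * k) - 2 * (2 + k) * τ) * (Real.exp (2 * (2 + k) * τ) * L (v ^ 2)) := by
        gcongr
    _ = Real.exp (-(ε * k)) * L (v ^ 2) := by rw [← mul_assoc, ← Real.exp_add]; ring_nf
    _ ≤ L (v ^ (2 * (1 + k) + 2 * k)) := by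
        rwa [show 2 * (1 + k) + 2 * k = 2 * (1 + 2 * k) by ring]
    _ ≤ L (Wbar * v ^ (2 * k)) := hlower

/-- Refined reweighing: for a unit vector `c`, a degree-`2(1+2k)` pseudoexpectation `L`
satisfying `{‖u‖₂² = 1}` with `L ⟨c,u⟩^{2(1+2k)} ≥ e^{-εk} L ⟨c,u⟩²` and
`L ⟨c,u⟩² ≥ τ^k`, and any `W̄` with `⟨c,u⟩^{2(1+k)} ⪯ W̄ ⪯ (⟨c,u⟩² + τ‖u‖₂²)^{1+k}`,
we have `L (W̄ ⟨c,u⟩^{2k}) ≥ e^{-εk - 2(2+k)τ} L W̄`. -/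
theorem stmt17 (n : ℕ) (c : Fin n → ℝ) (hc : ∑ j, c j ^ 2 = 1)
    (k : ℕ) (hk : 1 ≤ k) (ε τ : ℝ) (hε : 0 < ε) (hτ0 : 0 < τ) (hτ1 : τ < 1)
    (hkτ : (1 + (k : ℝ)) * τ ≤ 1 / 2)
    (L : MvPolynomial (Fin n) ℝ → ℝ)
    (hL : IsPseudoExpectation n (2 * (1 + 2 * k)) L)
    (hconstr : SatisfiesZero n (2 * (1 + 2 * k)) L ((∑ j, X j ^ 2) - 1))
    (h1 : Real.exp (-(ε * k)) * L ((∑ j, C (c j) * X j) ^ 2) ≤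
      L ((∑ j, C (c j) * X j) ^ (2 * (1 + 2 * k))))
    (h2 : τ ^ k ≤ L ((∑ j, C (c j) * X j) ^ 2))
    (Wbar : MvPolynomial (Fin n) ℝ)
    (hW1 : IsSOS (Wbar - (∑ j, C (c j) * X j) ^ (2 * (1 + k))))
    (hW2 : IsSOS (((∑ j, C (c j) * X j) ^ 2 + C τ * ∑ j, X j ^ 2) ^ (1 + k) - Wbar)) :
    Real.exp (-(ε * k) - 2 * (2 + k) * τ) * L Wbar ≤
      L (Wbar * (∑ j, C (c j) * X j) ^ (2 * k)) :=
  stmt17_general n c hc k ε τ hτ0 L hL hconstr h1 h2 Wbar hW1 hW2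
end

section
/- Let A be a σ-dictionary with columns a¹,…,a^m ∈ ℝⁿ, let τ ∈ (0,1), and let μ be a probability measure on ℝ^m with finite moments of degree 4 such that: E_μ x_i⁴ = 1 for every i; 0 ≤ E_μ x_i² x_j² ≤ τ for every pair i ≠ j; and E_μ x^α = 0 for every non-square monomial x^α of degree 4. Then for every fixed i ∈ {1,…,m} and every u ∈ ℝⁿ: ⟨aⁱ,u⟩² ≤ E_μ[x_i²·⟨Ax,u⟩²] ≤ ⟨aⁱ,u⟩² + τ·σ·‖u‖₂². -/
/-!
Writing `c_l = ⟨aˡ, u⟩`, expand `x_i² ⟨Ax, u⟩² = ∑_{l,l'} c_l c_l' x_i² x_l x_l'`. For `l ≠ l'`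
the monomial `x_i² x_l x_l'` has an odd exponent at `l`, so its mean vanishes, and
`E[x_i² ⟨Ax, u⟩²] = ∑_l c_l² E[x_i² x_l²]`. The term `l = i` is `c_i²`, the others are
nonnegative and at most `τ c_l²`, and `∑_l c_l² = ‖Aᵀu‖² ≤ σ ‖u‖²`.
-/

open MeasureTheory

section Monomials

variable {ι : Type*} [DecidableEq ι]

lemma prod_pow_pi_single_add [Fintype ι] (x : ι → ℝ) (i l l' : ι) :
    ∏ k, x k ^ (Pi.single i 2 + Pi.single l 1 + Pi.single l' 1 : ι → ℕ) k
      = x i ^ 2 * (x l * x l') := by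
  simp only [Pi.add_apply, pow_add, Finset.prod_mul_distrib, Pi.single_apply, pow_ite,
    pow_zero, pow_one, Finset.prod_ite_eq', Finset.mem_univ, if_true, mul_assoc]

lemma sum_pi_single_add [Fintype ι] (i l l' : ι) :
    ∑ k, (Pi.single i 2 + Pi.single l 1 + Pi.single l' 1 : ι → ℕ) k = 4 := by
  simp [Finset.sum_add_distrib]

lemma not_even_pi_single_add_apply {i l l' : ι} (h : l ≠ l') :
    ¬ Even ((Pi.single i 2 + Pi.single l 1 + Pi.single l' 1 : ι → ℕ) l) := by
  rcases eq_or_ne l i with rfl | hli <;> simp [*, parity_simps]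

end Monomials

lemma integral_mul_sum_sq_of_orthogonal {ι Ω : Type*} [Fintype ι] [MeasurableSpace Ω]
    {μ : Measure Ω} (w : Ω → ℝ) (X : ι → Ω → ℝ) (c : ι → ℝ)
    (hint : ∀ l l', Integrable (fun ω => w ω * (X l ω * X l' ω)) μ)
    (horth : ∀ l l', l ≠ l' → ∫ ω, w ω * (X l ω * X l' ω) ∂μ = 0) :
    ∫ ω, w ω * (∑ l, X l ω * c l) ^ 2 ∂μ = ∑ l, c l ^ 2 * ∫ ω, w ω * (X l ω * X l ω) ∂μ := by
  have hexpand : ∀ ω, w ω * (∑ l, X l ω * c l) ^ 2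
      = ∑ l, ∑ l', c l * c l' * (w ω * (X l ω * X l' ω)) := by
    intro ω
    rw [sq, Finset.sum_mul_sum, Finset.mul_sum]
    refine Finset.sum_congr rfl fun l _ => ?_
    rw [Finset.mul_sum]
    exact Finset.sum_congr rfl fun l' _ => by ring
  calc ∫ ω, w ω * (∑ l, X l ω * c l) ^ 2 ∂μ
      = ∑ l, ∑ l', c l * c l' * ∫ ω, w ω * (X l ω * X l' ω) ∂μ := by
        simp only [hexpand]
        rw [integral_finsetSum _ fun l _ => integrable_finsetSum _ fun l' _ =>
          (hint l l').const_mul _]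
        refine Finset.sum_congr rfl fun l _ => ?_
        rw [integral_finsetSum _ fun l' _ => (hint l l').const_mul _]
        simp only [integral_const_mul]
    _ = ∑ l, c l ^ 2 * ∫ ω, w ω * (X l ω * X l ω) ∂μ := by
        refine Finset.sum_congr rfl fun l _ => ?_
        rw [Finset.sum_eq_single l (fun l' _ h => by rw [horth l l' h.symm, mul_zero])
          (by simp), sq]

section WeightedSums

variable {ι : Type*} [Fintype ι] (c E : ι → ℝ) {i : ι}

lemma sq_le_sum_sq_mul (hEi : E i = 1) (hE : ∀ l, 0 ≤ E l) :
    c i ^ 2 ≤ ∑ l, c l ^ 2 * E l := by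
  simpa [hEi] using Finset.single_le_sum (f := fun l => c l ^ 2 * E l)
    (fun l _ => mul_nonneg (sq_nonneg _) (hE l)) (Finset.mem_univ i)

lemma sum_sq_mul_le [DecidableEq ι] {τ : ℝ} (hτ : 0 ≤ τ) (hEi : E i = 1)
    (hE : ∀ l, l ≠ i → E l ≤ τ) :
    ∑ l, c l ^ 2 * E l ≤ c i ^ 2 + τ * ∑ l, c l ^ 2 := by
  rw [← Finset.add_sum_erase _ _ (Finset.mem_univ i), hEi, mul_one, add_le_add_iff_left]
  calc ∑ l ∈ Finset.univ.erase i, c l ^ 2 * E l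
      ≤ ∑ l ∈ Finset.univ.erase i, τ * c l ^ 2 :=
        Finset.sum_le_sum fun l hl => by
          rw [mul_comm]
          exact mul_le_mul_of_nonneg_right (hE l (Finset.ne_of_mem_erase hl)) (sq_nonneg _)
    _ ≤ τ * ∑ l, c l ^ 2 := by
        rw [← Finset.mul_sum]
        exact mul_le_mul_of_nonneg_left (Finset.sum_le_sum_of_subset_of_nonneg
          (Finset.subset_univ _) fun l _ _ => sq_nonneg _) hτ

end WeightedSums

theorem stmt19_general (n m : ℕ) (σ : ℝ)
    (a : Fin m → Fin n → ℝ)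
    (hdict : ∀ u : Fin n → ℝ, ∑ i, (∑ j, a i j * u j) ^ 2 ≤ σ * ∑ j, u j ^ 2)
    (τ : ℝ) (hτ0 : 0 < τ)
    (μ : Measure (Fin m → ℝ))
    (hint : ∀ α : Fin m → ℕ, (∑ k, α k) ≤ 4 →
      Integrable (fun x => ∏ k, x k ^ α k) μ)
    (hmom1 : ∀ i, ∫ x, x i ^ 4 ∂μ = 1)
    (hmom2 : ∀ i j, i ≠ j →
      0 ≤ (∫ x, x i ^ 2 * x j ^ 2 ∂μ) ∧ (∫ x, x i ^ 2 * x j ^ 2 ∂μ) ≤ τ)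
    (hmom3 : ∀ α : Fin m → ℕ, (∑ k, α k) = 4 → (∃ k, ¬ Even (α k)) →
      ∫ x, ∏ k, x k ^ α k ∂μ = 0)
    (i : Fin m) (u : Fin n → ℝ) :
    (∑ j, a i j * u j) ^ 2 ≤
        (∫ x, x i ^ 2 * (∑ l, x l * (∑ j, a l j * u j)) ^ 2 ∂μ) ∧
      (∫ x, x i ^ 2 * (∑ l, x l * (∑ j, a l j * u j)) ^ 2 ∂μ) ≤
        (∑ j, a i j * u j) ^ 2 + τ * σ * ∑ j, u j ^ 2 := by
  set c : Fin m → ℝ := fun l => ∑ j, a l j * u j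
  set E : Fin m → ℝ := fun l => ∫ x, x i ^ 2 * (x l * x l) ∂μ with hE
  have hmonomial (l l' : Fin m) :
      Integrable (fun x : Fin m → ℝ => x i ^ 2 * (x l * x l')) μ := by
    simpa only [prod_pow_pi_single_add] using hint _ (sum_pi_single_add i l l').le
  have horth (l l' : Fin m) (h : l ≠ l') : ∫ x, x i ^ 2 * (x l * x l') ∂μ = 0 := by
    simpa only [prod_pow_pi_single_add] using
      hmom3 _ (sum_pi_single_add i l l') ⟨l, not_even_pi_single_add_apply h⟩
  have hexpand := integral_mul_sum_sq_of_orthogonal (fun x : Fin m → ℝ => x i ^ 2)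
    (fun l x => x l) c hmonomial horth
  have hEsq : ∀ l, E l = ∫ x, x i ^ 2 * x l ^ 2 ∂μ := fun l => by simp only [hE, sq]
  have hEi : E i = 1 := by rw [← hmom1 i, hEsq]; ring_nf
  have hEnonneg : ∀ l, 0 ≤ E l := fun l => by
    rcases eq_or_ne l i with rfl | hl
    · rw [hEi]; exact zero_le_one
    · exact hEsq l ▸ (hmom2 i l hl.symm).1
  rw [hexpand]
  refine ⟨sq_le_sum_sq_mul c E hEi hEnonneg, ?_⟩
  calc ∑ l, c l ^ 2 * E l ≤ c i ^ 2 + τ * ∑ l, c l ^ 2 :=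
        sum_sq_mul_le c E hτ0.le hEi fun l hl => hEsq l ▸ (hmom2 i l hl.symm).2
    _ ≤ c i ^ 2 + τ * σ * ∑ j, u j ^ 2 := by
        rw [mul_assoc]; gcongr; exact hdict u

/-- For a `σ`-dictionary `A` with columns `a 1, …, a m` and a probability measure `μ` on
`ℝ^m` with `E x_i⁴ = 1`, `0 ≤ E x_i² x_j² ≤ τ` for `i ≠ j`, and vanishing non-square
moments of degree 4, we have
`⟨aⁱ,u⟩² ≤ E[x_i² ⟨Ax,u⟩²] ≤ ⟨aⁱ,u⟩² + τ σ ‖u‖₂²` for every `i` and every `u ∈ ℝⁿ`. -/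
theorem stmt19 (n m : ℕ) (σ : ℝ) (hσ : 1 ≤ σ)
    (a : Fin m → Fin n → ℝ)
    (hunit : ∀ i, ∑ j, a i j ^ 2 = 1)
    (hdict : ∀ u : Fin n → ℝ, ∑ i, (∑ j, a i j * u j) ^ 2 ≤ σ * ∑ j, u j ^ 2)
    (τ : ℝ) (hτ0 : 0 < τ) (hτ1 : τ < 1)
    (μ : Measure (Fin m → ℝ)) [IsProbabilityMeasure μ]
    (hint : ∀ α : Fin m → ℕ, (∑ k, α k) ≤ 4 →
      Integrable (fun x => ∏ k, x k ^ α k) μ)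
    (hmom1 : ∀ i, ∫ x, x i ^ 4 ∂μ = 1)
    (hmom2 : ∀ i j, i ≠ j →
      0 ≤ (∫ x, x i ^ 2 * x j ^ 2 ∂μ) ∧ (∫ x, x i ^ 2 * x j ^ 2 ∂μ) ≤ τ)
    (hmom3 : ∀ α : Fin m → ℕ, (∑ k, α k) = 4 → (∃ k, ¬ Even (α k)) →
      ∫ x, ∏ k, x k ^ α k ∂μ = 0)
    (i : Fin m) (u : Fin n → ℝ) :
    (∑ j, a i j * u j) ^ 2 ≤
        (∫ x, x i ^ 2 * (∑ l, x l * (∑ j, a l j * u j)) ^ 2 ∂μ) ∧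
      (∫ x, x i ^ 2 * (∑ l, x l * (∑ j, a l j * u j)) ^ 2 ∂μ) ≤
        (∑ j, a i j * u j) ^ 2 + τ * σ * ∑ j, u j ^ 2 :=
  stmt19_general n m σ a hdict τ hτ0 μ hint hmom1 hmom2 hmom3 i u
end
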